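/- Let H be a Hopf algebra over a commutative ring k, (δ, σ) a modular pair in involution (i.e. S̃(S̃(h)) = σ·h·S(σ) for all h, where S̃(h) = δ(h₍₁₎) S(h₍₂₎)), and assume H is cocommutative or, more generally, work in the category of k-modules with the flip braiding. Define τ₂ : H ⊗ H → H ⊗ H by τ₂(g ⊗ h) = S̃(g)₍₁₎·h ⊗ S̃(g)₍₂₎·σ. Then τ₂³ = id on H ⊗ H. -/

import Mathlib

/-!
In the algebra `H ⊗ H` the operator reads `τ₂ (g ⊗ h) = Δ(S̃ g) · (h ⊗ σ)`. As `S̃` is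
anti-multiplicative and `Δ` multiplicative, `τ₂ (z · (h ⊗ b)) = Δ(S̃ h) · τ'(z) · (b ⊗ σ)`, where
`τ'` is the operator for `σ = 1`; and the anti-comultiplicativity `Δ ∘ S = (S ⊗ S) ∘ flip ∘ Δ`
together with `Σ S²(g₂) S̃(g₁) = δ(g) 1` gives `τ'(Δ(S̃ g)) = 1 ⊗ S̃²(g)`. Hence
`τ₂²(g ⊗ h) = Δ(S̃ h) · (σ ⊗ S̃²(g) σ) = Δ(S̃ h) · (σ ⊗ σ g)` by the involution condition, and once
more `τ₂³(g ⊗ h) = Δ(S̃ σ) · (σ g ⊗ σ h) = (S σ ⊗ S σ) · (σ g ⊗ σ h) = g ⊗ h`.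
-/

open TensorProduct Coalgebra HopfAlgebra

variable {k H : Type*} [CommRing k] [Ring H] [HopfAlgebra k H]

/-- The `δ`-twisted antipode `S̃(h) = δ(h₍₁₎) • S(h₍₂₎)`. -/
noncomputable def twistedAntipode (δ : H →ₐ[k] k) : H →ₗ[k] H :=
  (TensorProduct.lid k H).toLinearMap ∘ₗ
    TensorProduct.map δ.toLinearMap (antipode (R := k)) ∘ₗ Coalgebra.comul

/-- The degree-2 Connes–Moscovici paracocyclic operator
τ₂(g ⊗ h) = S̃(g)₍₁₎·h ⊗ S̃(g)₍₂₎·σ. -/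
noncomputable def tau2 (δ : H →ₐ[k] k) (σ : H) : H ⊗[k] H →ₗ[k] H ⊗[k] H :=
  TensorProduct.map (LinearMap.mul' k H) (LinearMap.mulRight k σ) ∘ₗ
    (TensorProduct.assoc k H H H).symm.toLinearMap ∘ₗ
    LinearMap.lTensor H (TensorProduct.comm k H H).toLinearMap ∘ₗ
    (TensorProduct.assoc k H H H).toLinearMap ∘ₗ
    LinearMap.rTensor H (Coalgebra.comul ∘ₗ twistedAntipode δ)

namespace HopfAlgebra

variable {R A : Type*} [CommSemiring R] [Semiring A] [HopfAlgebra R A]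

lemma sum_antipode_tmul_one_mul_comul {a : A} {ι : Type*} (r : Repr R a ι) :
    ∑ i ∈ r.index, (antipode R (r.left i) ⊗ₜ[R] (1 : A)) * comul (r.right i) =
      (1 : A) ⊗ₜ[R] a := by
  have coassoc := congr(TensorProduct.lift (LinearMap.mul R (A ⊗[R] A) ∘ₗ
    (Algebra.TensorProduct.includeLeft (S := R) (B := A)).toLinearMap ∘ₗ antipode R)
      $(sum_tmul_tmul_eq r (fun i => ℛ R (r.left i)) (fun i => ℛ R (r.right i))))
  simp only [map_sum, lift.tmul, LinearMap.comp_apply, AlgHom.toLinearMap_apply,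
    Algebra.TensorProduct.includeLeft_apply, LinearMap.mul_apply',
    Algebra.TensorProduct.tmul_mul_tmul, one_mul, ← sum_tmul, sum_antipode_mul_eq_smul] at coassoc
  simp only [← (ℛ R _).eq, Finset.mul_sum, Algebra.TensorProduct.tmul_mul_tmul, one_mul,
    ← coassoc, smul_tmul, ← tmul_sum, sum_counit_smul]

lemma convMul_map_antipode_comm_comul :
    WithConv.toConv (map (antipode R) (antipode R) ∘ₗ
        (TensorProduct.comm R A A).toLinearMap ∘ₗ comul) *
      WithConv.toConv (comul (R := R) (A := A)) = 1 := by
  ext c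
  let Ψ : A ⊗[R] A →ₗ[R] A ⊗[R] A := TensorProduct.lift <|
    (LinearMap.mul R (A ⊗[R] A) ∘ₗ
      (Algebra.TensorProduct.includeLeft (S := R) (B := A)).toLinearMap ∘ₗ antipode R).compl₂ comul
  have coassoc := congr(TensorProduct.lift ((LinearMap.mul R (A ⊗[R] A) ∘ₗ
    (Algebra.TensorProduct.includeRight (R := R) (A := A)).toLinearMap ∘ₗ antipode R).compl₂ Ψ)
      $(sum_tmul_tmul_eq (ℛ R c) (fun i => ℛ R ((ℛ R c).left i))
        (fun i => ℛ R ((ℛ R c).right i))))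
  simp only [map_sum, lift.tmul, Ψ, LinearMap.comp_apply, LinearMap.compl₂_apply,
    AlgHom.toLinearMap_apply, Algebra.TensorProduct.includeLeft_apply,
    Algebra.TensorProduct.includeRight_apply, LinearMap.mul_apply', ← Finset.mul_sum,
    sum_antipode_tmul_one_mul_comul] at coassoc
  simp only [← mul_assoc, Algebra.TensorProduct.tmul_mul_tmul, one_mul, mul_one, ← tmul_sum,
    sum_antipode_mul_eq_smul] at coassoc
  rw [(ℛ R c).convMul_apply, LinearMap.convOne_apply, Algebra.algebraMap_eq_smul_one,
    Algebra.TensorProduct.one_def, ← tmul_smul, ← coassoc]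
  simp only [LinearMap.comp_apply, LinearEquiv.coe_coe, ← (ℛ R _).eq, map_sum,
    TensorProduct.comm_tmul, map_tmul, Finset.sum_mul]

lemma comul_antipode (a : A) :
    comul (antipode R a) =
      map (antipode R) (antipode R) (TensorProduct.comm R A A (comul (R := R) a)) := by
  have h := left_inv_eq_right_inv (M := WithConv (A →ₗ[R] A ⊗[R] A))
    convMul_map_antipode_comm_comul LinearMap.comul_right_inv
  exact (congr($h a)).symm

end HopfAlgebra

section ModularPair

variable (δ : H →ₐ[k] k)

lemma twistedAntipode_eq_sum {g : H} {ι : Type*} (r : Repr k g ι) :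
    twistedAntipode δ g = ∑ i ∈ r.index, δ (r.left i) • antipode k (r.right i) := by
  simp [twistedAntipode, ← r.eq]

lemma twistedAntipode_mul (a b : H) :
    twistedAntipode δ (a * b) = twistedAntipode δ b * twistedAntipode δ a := by
  rw [twistedAntipode_eq_sum δ ((ℛ k a).mul (ℛ k b)), twistedAntipode_eq_sum δ (ℛ k a),
    twistedAntipode_eq_sum δ (ℛ k b), Finset.sum_mul_sum, Finset.sum_comm]
  simp only [Repr.mul_index, Finset.sum_product, Repr.mul_left, Repr.mul_right, map_mul,
    antipode_mul_antidistrib, smul_mul_smul_comm, mul_comm (δ ((ℛ k a).left _))]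

lemma twistedAntipode_of_isGroupLikeElem {σ : H} (hσ : IsGroupLikeElem k σ) (hδσ : δ σ = 1) :
    twistedAntipode δ σ = antipode k σ := by
  simp [twistedAntipode, hσ.comul_eq_tmul_self, hδσ]

lemma comul_twistedAntipode (g : H) :
    comul (twistedAntipode δ g) =
      map (antipode k) (twistedAntipode δ) (TensorProduct.comm k H H (comul (R := k) g)) := by
  let r := ℛ k g
  have coassoc := congr(((TensorProduct.lid k (H ⊗[k] H)).toLinearMap ∘ₗ
    map δ.toLinearMap ((TensorProduct.comm k H H).toLinearMap ∘ₗ map (antipode k) (antipode k)))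
      $(sum_tmul_tmul_eq r (fun i => ℛ k (r.left i)) (fun i => ℛ k (r.right i))))
  simp only [map_sum, LinearMap.comp_apply, map_tmul, LinearEquiv.coe_coe, lid_tmul,
    TensorProduct.comm_tmul, AlgHom.toLinearMap_apply] at coassoc
  simp only [twistedAntipode_eq_sum δ r, twistedAntipode_eq_sum δ (ℛ k (r.left _)), map_sum,
    map_smul, comul_antipode, ← (ℛ k (r.right _)).eq, ← r.eq, TensorProduct.comm_tmul, map_tmul,
    tmul_sum, tmul_smul, Finset.smul_sum, coassoc]

lemma sum_antipode_antipode_mul_twistedAntipode {g : H} {ι : Type*} (r : Repr k g ι) :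
    ∑ i ∈ r.index, antipode k (antipode k (r.right i)) * twistedAntipode δ (r.left i) =
      δ g • 1 := by
  have coassoc := congr(((TensorProduct.lid k H).toLinearMap ∘ₗ
    map δ.toLinearMap (antipode k ∘ₗ LinearMap.mul' k H ∘ₗ LinearMap.lTensor H (antipode k)))
      $(sum_tmul_tmul_eq r (fun i => ℛ k (r.left i)) (fun i => ℛ k (r.right i))))
  simp only [map_sum, LinearMap.comp_apply, map_tmul, LinearEquiv.coe_coe, lid_tmul,
    LinearMap.lTensor_tmul, LinearMap.mul'_apply, AlgHom.toLinearMap_apply,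
    ← Finset.smul_sum, ← map_sum (antipode k), sum_mul_antipode_eq_smul, map_smul, antipode_one,
    smul_smul, ← Finset.sum_smul] at coassoc
  have hcounit := congr(TensorProduct.rid k H $(sum_tmul_counit_eq r))
  simp only [map_sum, rid_tmul, one_smul] at hcounit
  simp only [twistedAntipode_eq_sum δ (ℛ k (r.left _)), Finset.mul_sum, mul_smul_comm,
    ← antipode_mul_antidistrib, coassoc]
  simp only [← hcounit, map_sum, map_smul, smul_eq_mul, mul_comm]

lemma tau2_tmul (σ g h : H) :
    tau2 δ σ (g ⊗ₜ[k] h) = comul (twistedAntipode δ g) * (h ⊗ₜ[k] σ) := by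
  simp only [tau2, LinearMap.comp_apply, LinearMap.rTensor_tmul]
  induction comul (R := k) (twistedAntipode δ g) using TensorProduct.induction_on with
  | zero => simp
  | tmul x y => simp
  | add z w hz hw => simp_all [add_tmul, add_mul]

lemma tau2_mul_tmul (σ : H) (z : H ⊗[k] H) (h b : H) :
    tau2 δ σ (z * (h ⊗ₜ[k] b)) = comul (twistedAntipode δ h) * tau2 δ 1 z * (b ⊗ₜ[k] σ) := by
  induction z using TensorProduct.induction_on with
  | zero => simp
  | tmul x y =>
    simp only [Algebra.TensorProduct.tmul_mul_tmul, tau2_tmul, twistedAntipode_mul,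
      Bialgebra.comul_mul, mul_assoc, one_mul]
  | add z w hz hw => simp only [add_mul, map_add, hz, hw, mul_add]

lemma tau2_one_comul_twistedAntipode (g : H) :
    tau2 δ 1 (comul (twistedAntipode δ g)) = 1 ⊗ₜ[k] twistedAntipode δ (twistedAntipode δ g) := by
  let r := ℛ k g
  have coassoc := congr((map (LinearMap.mul' k H ∘ₗ (TensorProduct.comm k H H).toLinearMap ∘ₗ
      map (twistedAntipode δ) (antipode k ∘ₗ antipode k)) (twistedAntipode δ ∘ₗ antipode k) ∘ₗ
      (TensorProduct.assoc k H H H).symm.toLinearMap)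
    $(sum_tmul_tmul_eq r (fun i => ℛ k (r.left i)) (fun i => ℛ k (r.right i))))
  simp only [map_sum, LinearMap.comp_apply, LinearEquiv.coe_coe, assoc_symm_tmul, map_tmul,
    TensorProduct.comm_tmul, LinearMap.mul'_apply, ← sum_tmul,
    sum_antipode_antipode_mul_twistedAntipode] at coassoc
  simp only [comul_twistedAntipode δ g, ← r.eq, map_sum, TensorProduct.comm_tmul, map_tmul,
    tau2_tmul, comul_twistedAntipode δ (antipode k _), comul_antipode, ← (ℛ k (r.right _)).eq,
    Finset.sum_mul, Algebra.TensorProduct.tmul_mul_tmul, mul_one, ← coassoc]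
  simp only [twistedAntipode_eq_sum δ r, map_sum, map_smul, smul_tmul, tmul_sum]

lemma tau2_comul_twistedAntipode_mul_tmul (σ g h b : H) :
    tau2 δ σ (comul (twistedAntipode δ g) * (h ⊗ₜ[k] b)) =
      comul (twistedAntipode δ h) * (b ⊗ₜ[k] (twistedAntipode δ (twistedAntipode δ g) * σ)) := by
  rw [tau2_mul_tmul, tau2_one_comul_twistedAntipode, mul_assoc,
    Algebra.TensorProduct.tmul_mul_tmul, one_mul]

end ModularPair

/-- for a modular pair in involution, τ₂³ = id on H ⊗ H. -/
theorem tau2_cube (δ : H →ₐ[k] k) (σ : H)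
    (hΔ : Coalgebra.comul (R := k) σ = σ ⊗ₜ[k] σ)
    (hε : Coalgebra.counit (R := k) σ = (1 : k))
    (hδσ : δ σ = 1)
    (hMPI : ∀ h : H, twistedAntipode δ (twistedAntipode δ h) =
      σ * h * antipode (R := k) σ) :
    ∀ x : H ⊗[k] H, tau2 δ σ (tau2 δ σ (tau2 δ σ x)) = x := by
  have hσ : IsGroupLikeElem k σ := ⟨hε, hΔ⟩
  have hconj (x : H) : σ * x * antipode k σ * σ = σ * x := by
    rw [mul_assoc _ (antipode k σ), hσ.antipode_mul_cancel, mul_one]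
  have hcancel (x : H) : antipode k σ * (σ * x) = x := by
    rw [← mul_assoc, hσ.antipode_mul_cancel, one_mul]
  have hsq (g h : H) :
      tau2 δ σ (tau2 δ σ (g ⊗ₜ[k] h)) = comul (twistedAntipode δ h) * (σ ⊗ₜ[k] (σ * g)) := by
    rw [tau2_tmul, tau2_comul_twistedAntipode_mul_tmul, hMPI, hconj]
  have hcube : tau2 δ σ ∘ₗ tau2 δ σ ∘ₗ tau2 δ σ = LinearMap.id := by
    refine TensorProduct.ext' fun g h => ?_
    rw [LinearMap.comp_apply, LinearMap.comp_apply, hsq, tau2_comul_twistedAntipode_mul_tmul,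
      hMPI, hconj, twistedAntipode_of_isGroupLikeElem δ hσ hδσ, hσ.antipode.comul_eq_tmul_self,
      Algebra.TensorProduct.tmul_mul_tmul, hcancel, hcancel, LinearMap.id_apply]
  exact fun x => congr($hcube x)
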